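/- Let R : X → Y → Z → Prop be a ternary relation, Q a quantale, and f : Y → Q, g : Z → Q, h : X → Q. Define (f \ h) : Z → Q by (f \ h) z = ⨅ {f y ⟍ h x | x, y, R x y z} and (h / g) : Y → Q by (h / g) y = ⨅ {h x ⫻ g z | x, z, R x y z}, where for u, w ∈ Q, u ⟍ w = ⨆ {v | u * v ≤ w} and w ⫻ u = ⨆ {v | v * u ≤ w} are the residuals in Q. Then f ∗_R g ≤ h ↔ g ≤ f \ h ↔ f ≤ h / g, with functions ordered pointwise. -/

import Mathlib

/-- Relational convolution: `(f ∗_R g) x = ⨆ {f y * g z | R x y z}`. -/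
def rconv {X Y Z Q : Type*} [CompleteLattice Q] [Mul Q]
    (R : X → Y → Z → Prop) (f : Y → Q) (g : Z → Q) : X → Q :=
  fun x => ⨆ (y) (z) (_ : R x y z), f y * g z

/-- Left residual in a quantale: `u ⟍ w = ⨆ {v | u * v ≤ w}`. -/
def lres {Q : Type*} [CompleteLattice Q] [Mul Q] (u w : Q) : Q :=
  sSup {v | u * v ≤ w}

/-- Right residual in a quantale: `w ⫻ u = ⨆ {v | v * u ≤ w}`. -/
def rres {Q : Type*} [CompleteLattice Q] [Mul Q] (w u : Q) : Q :=
  sSup {v | v * u ≤ w}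

/-- `(f \ h) z = ⨅ {f y ⟍ h x | R x y z}`. -/
def lresConv {X Y Z Q : Type*} [CompleteLattice Q] [Mul Q]
    (R : X → Y → Z → Prop) (f : Y → Q) (h : X → Q) : Z → Q :=
  fun z => ⨅ (x) (y) (_ : R x y z), lres (f y) (h x)

/-- `(h / g) y = ⨅ {h x ⫻ g z | R x y z}`. -/
def rresConv {X Y Z Q : Type*} [CompleteLattice Q] [Mul Q]
    (R : X → Y → Z → Prop) (h : X → Q) (g : Z → Q) : Y → Q :=
  fun y => ⨅ (x) (z) (_ : R x y z), rres (h x) (g z)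

/-
Both residuations are instances of one fact: a map `φ` between complete lattices that preserves
suprema satisfies `φ b ≤ c ↔ b ≤ sSup {v | φ v ≤ c}`. After unfolding the suprema and infima,
each side of the statement says the same thing pointwise for every triple with `R x y z`.
-/

section SupPreserving

variable {α β : Type*} [CompleteLattice α] [CompleteLattice β] {φ : α → β}

theorem monotone_of_map_sSup (hφ : ∀ s, φ (sSup s) = ⨆ a ∈ s, φ a) : Monotone φ := by
  intro u v huv
  have hpair := hφ {u, v}
  rw [sSup_pair, sup_eq_right.mpr huv] at hpair
  rw [hpair]
  exact le_biSup φ (Set.mem_insert u {v})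

theorem map_le_iff_le_sSup_of_map_sSup (hφ : ∀ s, φ (sSup s) = ⨆ a ∈ s, φ a) {b : α} {c : β} :
    φ b ≤ c ↔ b ≤ sSup {v | φ v ≤ c} := by
  refine ⟨fun hb => le_sSup hb, fun hb => (monotone_of_map_sSup hφ hb).trans ?_⟩
  rw [hφ]
  exact iSup₂_le fun _ hv => hv

end SupPreserving

section Residuation

variable {X Y Z Q : Type*} [CompleteLattice Q] [Mul Q]

theorem mul_le_iff_le_lres (hdistr : ∀ (a : Q) (B : Set Q), a * sSup B = ⨆ b ∈ B, a * b)
    {a b c : Q} : a * b ≤ c ↔ b ≤ lres a c :=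
  map_le_iff_le_sSup_of_map_sSup (hdistr a)

theorem mul_le_iff_le_rres (hdistl : ∀ (A : Set Q) (b : Q), sSup A * b = ⨆ a ∈ A, a * b)
    {a b c : Q} : b * a ≤ c ↔ b ≤ rres c a :=
  map_le_iff_le_sSup_of_map_sSup (φ := (· * a)) (hdistl · a)

theorem rconv_le_iff {R : X → Y → Z → Prop} {f : Y → Q} {g : Z → Q} {h : X → Q} :
    rconv R f g ≤ h ↔ ∀ x y z, R x y z → f y * g z ≤ h x := by
  simp only [Pi.le_def, rconv, iSup_le_iff]

theorem le_lresConv_iff {R : X → Y → Z → Prop} {f : Y → Q} {g : Z → Q} {h : X → Q} :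
    g ≤ lresConv R f h ↔ ∀ x y z, R x y z → g z ≤ lres (f y) (h x) := by
  simp only [Pi.le_def, lresConv, le_iInf_iff]
  exact ⟨fun hg x y z hr => hg z x y hr, fun hg z x y hr => hg x y z hr⟩

theorem le_rresConv_iff {R : X → Y → Z → Prop} {f : Y → Q} {g : Z → Q} {h : X → Q} :
    f ≤ rresConv R h g ↔ ∀ x y z, R x y z → f y ≤ rres (h x) (g z) := by
  simp only [Pi.le_def, rresConv, le_iInf_iff]
  exact ⟨fun hf x y z hr => hf y x z hr, fun hf y x z hr => hf x y z hr⟩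

end Residuation

theorem res_lifting_general {X Y Z Q : Type*} [CompleteLattice Q] [Mul Q]
    (hdistl : ∀ (A : Set Q) (b : Q), sSup A * b = ⨆ a ∈ A, a * b)
    (hdistr : ∀ (a : Q) (B : Set Q), a * sSup B = ⨆ b ∈ B, a * b)
    (R : X → Y → Z → Prop) (f : Y → Q) (g : Z → Q) (h : X → Q) :
    (rconv R f g ≤ h ↔ g ≤ lresConv R f h) ∧
    (rconv R f g ≤ h ↔ f ≤ rresConv R h g) := by
  rw [rconv_le_iff, le_lresConv_iff, le_rresConv_iff]
  constructor
  · simp only [mul_le_iff_le_lres hdistr]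
  · simp only [mul_le_iff_le_rres hdistl]

theorem res_lifting {X Y Z Q : Type*} [CompleteLattice Q] [Mul Q]
    (mul_assoc : ∀ a b c : Q, a * b * c = a * (b * c))
    (hdistl : ∀ (A : Set Q) (b : Q), sSup A * b = ⨆ a ∈ A, a * b)
    (hdistr : ∀ (a : Q) (B : Set Q), a * sSup B = ⨆ b ∈ B, a * b)
    (R : X → Y → Z → Prop) (f : Y → Q) (g : Z → Q) (h : X → Q) :
    (rconv R f g ≤ h ↔ g ≤ lresConv R f h) ∧
    (rconv R f g ≤ h ↔ f ≤ rresConv R h g) :=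
  res_lifting_general hdistl hdistr R f g h
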